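/- arXiv:2512.00821 — 3 statements merged into one kernel-verified Lean document; each statement's English description precedes it below -/
import Mathlib

section
/- Let S and T be nonempty finite sets of points in EuclideanSpace ℝ (Fin 2), and let λ > 0 be a real number. Then the set {θ ∈ Set.Ico 0 (2π) : |max_{v ∈ S} ⟪v, ω(θ)⟫ − max_{w ∈ T} ⟪w, ω(θ)⟫| = λ} is finite, where ω(θ) denotes the unit direction with coordinates (cos θ, sin θ). -/
/-!
At a direction `ω`, both maxima are attained, so `I_S(ω) - I_T(ω) = ⟪v - w, ω⟫` for some
`v ∈ S`, `w ∈ T`. Hence the threshold set lies in the finite union over such pairs of the level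
sets `|⟪u, ω(θ)⟫| = λ`. Each level set `⟪u, ω(θ)⟫ = c` with `c ≠ 0` is the zero set of the
analytic function `θ ↦ u₀ cos θ + u₁ sin θ - c`, which is not identically zero because its values
at `0` and `π` sum to `-2c`; by the isolated zeros principle it meets a compact interval in
finitely many points.
-/

open Real Filter

theorem AnalyticOnNhd.finite_zeros_inter_of_isCompact {𝕜 E : Type*} [NontriviallyNormedField 𝕜]
    [ConnectedSpace 𝕜] [NormedAddCommGroup E] [NormedSpace 𝕜 E] {f : 𝕜 → E} {x : 𝕜} {K : Set 𝕜}
    (hf : AnalyticOnNhd 𝕜 f Set.univ) (hx : f x ≠ 0) (hK : IsCompact K) :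
    {y ∈ K | f y = 0}.Finite :=
  (hK.finite_sdiff_of_mem_codiscreteWithin
    (codiscreteWithin_mono (Set.subset_univ K) (hf.preimage_zero_mem_codiscrete hx))).subset
    fun _ ⟨hy, hzero⟩ => ⟨hy, by simpa using hzero⟩

theorem Finset.exists_sup'_inner_sub_sup'_inner {E : Type*} [NormedAddCommGroup E]
    [InnerProductSpace ℝ E] (S T : Finset E) (hS : S.Nonempty) (hT : T.Nonempty) (x : E) :
    ∃ v ∈ S, ∃ w ∈ T,
      S.sup' hS (fun v => inner ℝ v x) - T.sup' hT (fun w => inner ℝ w x) = inner ℝ (v - w) x := by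
  obtain ⟨v, hv, hv_max⟩ := S.exists_mem_eq_sup' hS fun v => inner ℝ v x
  obtain ⟨w, hw, hw_max⟩ := T.exists_mem_eq_sup' hT fun w => inner ℝ w x
  exact ⟨v, hv, w, hw, by rw [hv_max, hw_max, inner_sub_left]⟩

noncomputable def unitDir (θ : ℝ) : EuclideanSpace ℝ (Fin 2) :=
  (WithLp.equiv 2 (Fin 2 → ℝ)).symm ![cos θ, sin θ]

theorem inner_unitDir (u : EuclideanSpace ℝ (Fin 2)) (θ : ℝ) :
    inner ℝ u (unitDir θ) = u 0 * cos θ + u 1 * sin θ := by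
  simp [unitDir, PiLp.inner_apply, Fin.sum_univ_two, mul_comm]

theorem finite_setOf_inner_unitDir_eq (u : EuclideanSpace ℝ (Fin 2)) {c : ℝ} (hc : c ≠ 0)
    {K : Set ℝ} (hK : IsCompact K) : {θ ∈ K | inner ℝ u (unitDir θ) = c}.Finite := by
  have hf : AnalyticOnNhd ℝ (fun θ => inner ℝ u (unitDir θ) - c) Set.univ := by
    simp only [inner_unitDir]
    intro x _
    fun_prop
  obtain ⟨x, hx⟩ : ∃ x, inner ℝ u (unitDir x) - c ≠ 0 := by
    by_contra! h
    have h₀ := h 0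
    have hπ := h π
    simp only [inner_unitDir, cos_zero, sin_zero, cos_pi, sin_pi] at h₀ hπ
    exact hc (by linarith)
  simpa only [sub_eq_zero] using hf.finite_zeros_inter_of_isCompact hx hK

theorem finite_setOf_abs_inner_unitDir_eq (u : EuclideanSpace ℝ (Fin 2)) {c : ℝ} (hc : 0 < c)
    {K : Set ℝ} (hK : IsCompact K) : {θ ∈ K | |inner ℝ u (unitDir θ)| = c}.Finite :=
  ((finite_setOf_inner_unitDir_eq u hc.ne' hK).union
    (finite_setOf_inner_unitDir_eq u (neg_ne_zero.2 hc.ne') hK)).subset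
    fun _ ⟨hθ, habs⟩ => ((abs_eq hc.le).1 habs).imp (⟨hθ, ·⟩) (⟨hθ, ·⟩)

theorem difference_curve_threshold_finite
    (S T : Finset (EuclideanSpace ℝ (Fin 2))) (hS : S.Nonempty) (hT : T.Nonempty)
    (lam : ℝ) (hlam : 0 < lam) :
    {θ ∈ Set.Ico 0 (2 * π) |
      |(S.sup' hS fun v =>
          (inner ℝ v ((WithLp.equiv 2 (Fin 2 → ℝ)).symm ![Real.cos θ, Real.sin θ]) : ℝ)) -
        (T.sup' hT fun w =>
          (inner ℝ w ((WithLp.equiv 2 (Fin 2 → ℝ)).symm ![Real.cos θ, Real.sin θ]) : ℝ))|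
        = lam}.Finite := by
  change {θ ∈ Set.Ico 0 (2 * π) |
    |S.sup' hS (fun v => inner ℝ v (unitDir θ)) - T.sup' hT (fun w => inner ℝ w (unitDir θ))|
      = lam}.Finite
  have hpairs := S.finite_toSet.biUnion fun v _ => T.finite_toSet.biUnion fun w _ =>
    finite_setOf_abs_inner_unitDir_eq (v - w) hlam (isCompact_Icc (a := 0) (b := 2 * π))
  refine hpairs.subset ?_
  rintro θ ⟨hθ, hthreshold⟩
  obtain ⟨v, hv, w, hw, hdiff⟩ := S.exists_sup'_inner_sub_sup'_inner T hS hT (unitDir θ)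
  rw [hdiff] at hthreshold
  simp only [Set.mem_iUnion]
  exact ⟨v, hv, w, hw, Set.Ico_subset_Icc_self hθ, hthreshold⟩
end

section
/- Let S be a finite set of points in EuclideanSpace ℝ (Fin 2). Then the set of θ ∈ Set.Ico 0 (2π) for which there exist two distinct points u, v ∈ S with ⟪u, ω(θ)⟫ = ⟪v, ω(θ)⟫ = max_{p ∈ S} ⟪p, ω(θ)⟫ is finite, where ω(θ) denotes the unit direction with coordinates (cos θ, sin θ). -/
open Real Module Set

/-! A tie between two distinct points `u ≠ v` in direction `ω` forces `⟪u - v, ω⟫ = 0`. In the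
plane, the vectors orthogonal to the nonzero vector `u - v` form a line, which contains only two
unit vectors, and `θ ↦ (cos θ, sin θ)` is injective on `[0, 2π)`, so each of the finitely many pairs
contributes at most two transition directions. -/

lemma finite_sphere_inter_span_singleton {E : Type*} [NormedAddCommGroup E] [NormedSpace ℝ E]
    (v : E) (r : ℝ) : (Metric.sphere (0 : E) r ∩ (ℝ ∙ v)).Finite := by
  rcases eq_or_ne v 0 with rfl | hv
  · exact (finite_singleton 0).subset fun x hx => by simpa using hx.2
  refine (((finite_singleton (r / ‖v‖)).insert (-(r / ‖v‖))).image (· • v)).subset ?_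
  rintro x ⟨hx, hxv⟩
  obtain ⟨c, rfl⟩ := Submodule.mem_span_singleton.1 hxv
  rw [mem_sphere_zero_iff_norm, norm_smul, Real.norm_eq_abs] at hx
  have hc : |c| = r / ‖v‖ := by rw [← hx, mul_div_cancel_right₀ _ (norm_ne_zero_iff.2 hv)]
  refine ⟨c, ?_, rfl⟩
  rcases abs_choice c with h | h
  · exact Or.inr (h ▸ hc)
  · exact Or.inl (by linarith)

lemma finite_sphere_inter_orthogonal_span_singleton {E : Type*} [NormedAddCommGroup E]
    [InnerProductSpace ℝ E] (hE : finrank ℝ E = 2) {w : E} (hw : w ≠ 0) (r : ℝ) :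
    (Metric.sphere (0 : E) r ∩ (ℝ ∙ w)ᗮ).Finite := by
  have : Fact (finrank ℝ E = 1 + 1) := ⟨hE⟩
  obtain ⟨v, -, hv⟩ :=
    finrank_eq_one_iff'.1 (Submodule.finrank_orthogonal_span_singleton (𝕜 := ℝ) hw)
  refine (finite_sphere_inter_span_singleton (v : E) r).subset ?_
  rintro x ⟨hx, hxw⟩
  obtain ⟨c, hc⟩ := hv ⟨x, hxw⟩
  exact ⟨hx, Submodule.mem_span_singleton.2 ⟨c, congrArg Subtype.val hc⟩⟩

noncomputable def polarUnit (θ : ℝ) : EuclideanSpace ℝ (Fin 2) :=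
  (WithLp.equiv 2 (Fin 2 → ℝ)).symm ![cos θ, sin θ]

lemma norm_polarUnit (θ : ℝ) : ‖polarUnit θ‖ = 1 := by
  simp [polarUnit, EuclideanSpace.norm_eq, Fin.sum_univ_two]

lemma injOn_polarUnit : InjOn polarUnit (Ico 0 (2 * π)) := by
  intro x hx y hy hxy
  have hcos : cos x = cos y := by simpa [polarUnit] using congrFun (congrArg (⇑) hxy) 0
  have hsin : sin x = sin y := by simpa [polarUnit] using congrFun (congrArg (⇑) hxy) 1
  have : Fact (0 < 2 * π) := ⟨two_pi_pos⟩
  rw [← zero_add (2 * π)] at hx hy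
  exact (AddCircle.coe_eq_coe_iff_of_mem_Ico hx hy).1 (Real.Angle.cos_sin_inj hcos hsin)

lemma finite_setOf_inner_polarUnit_eq_zero {w : EuclideanSpace ℝ (Fin 2)} (hw : w ≠ 0) :
    {θ ∈ Ico 0 (2 * π) | inner ℝ w (polarUnit θ) = 0}.Finite := by
  refine Finite.of_finite_image ?_ (injOn_polarUnit.mono fun θ hθ => hθ.1)
  refine (finite_sphere_inter_orthogonal_span_singleton finrank_euclideanSpace_fin hw 1).subset ?_
  rintro _ ⟨θ, ⟨-, hθ⟩, rfl⟩
  exact ⟨mem_sphere_zero_iff_norm.2 (norm_polarUnit θ),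
    Submodule.mem_orthogonal_singleton_iff_inner_right.2 hθ⟩

theorem active_vertex_transitions_finite (S : Finset (EuclideanSpace ℝ (Fin 2))) :
    {θ ∈ Set.Ico 0 (2 * π) |
      ∃ u ∈ S, ∃ v ∈ S, u ≠ v ∧
        (inner ℝ u ((WithLp.equiv 2 (Fin 2 → ℝ)).symm ![Real.cos θ, Real.sin θ]) : ℝ) =
          (inner ℝ v ((WithLp.equiv 2 (Fin 2 → ℝ)).symm ![Real.cos θ, Real.sin θ]) : ℝ) ∧
        (∀ p ∈ S,
          (inner ℝ p ((WithLp.equiv 2 (Fin 2 → ℝ)).symm ![Real.cos θ, Real.sin θ]) : ℝ) ≤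
            (inner ℝ u ((WithLp.equiv 2 (Fin 2 → ℝ)).symm ![Real.cos θ, Real.sin θ]) : ℝ))}.Finite := by
  refine (S.offDiag.finite_toSet.biUnion fun p hp =>
    finite_setOf_inner_polarUnit_eq_zero (sub_ne_zero.2 (Finset.mem_offDiag.1 hp).2.2)).subset ?_
  rintro θ ⟨hθ, u, hu, v, hv, huv, htie, -⟩
  refine mem_biUnion (x := (u, v)) (Finset.mem_offDiag.2 ⟨hu, hv, huv⟩) ⟨hθ, ?_⟩
  rw [inner_sub_left, sub_eq_zero]
  exact htie
end

section
/- Let v be a unit vector in EuclideanSpace ℝ (Fin 3) and consider the stereographic projection from the pole v, the map sending a point x of the unit sphere with x ≠ v to (2 / (1 − ⟪v, x⟫)) • (orthogonal projection of x onto (ℝ∙v)ᗮ) in the orthogonal complement of the span of v. Let n be a nonzero vector in EuclideanSpace ℝ (Fin 3) and let C = {x : ‖x‖ = 1 ∧ ⟪n, x⟫ = 0 ∧ x ≠ v} be the great circle determined by n with the pole removed. Then the image of C under the stereographic projection is contained in a circle or a line: there exist a center c and radius ρ with every image point y satisfying ‖y − c‖ = ρ, or there exist a point p and a nonzero direction w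 such that every image point y equals p + t • w for some real t. -/
/-!
Let `P` be the orthogonal projection onto the plane `(ℝ ∙ v)ᗮ`, so that `P x` has squared norm
`1 - ⟪v, x⟫²` and `⟪P x, P n⟫ = ⟪x, n⟫ - ⟪v, x⟫ ⟪v, n⟫`. If `⟪v, n⟫ ≠ 0`, expanding the square shows
that every image point `y` of the great circle satisfies `‖y + (2 / ⟪v, n⟫) • P n‖ = 2 ‖n‖ / |⟪v, n⟫|`.
If `⟪v, n⟫ = 0`, then `P n = n` is a nonzero vector of the plane orthogonal to every image point, so
the image lies on the line `nᗮ` of that plane.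
-/

open Module Submodule
open scoped RealInnerProductSpace

section Stereographic

variable {E : Type*} [NormedAddCommGroup E] [InnerProductSpace ℝ E] {v : E}

theorem inner_orthogonalProjectionOnto_orthogonal_span_singleton (hv : ‖v‖ = 1) (x y : E) :
    ⟪(ℝ ∙ v)ᗮ.orthogonalProjectionOnto x, (ℝ ∙ v)ᗮ.orthogonalProjectionOnto y⟫ =
      ⟪x, y⟫ - ⟪v, x⟫ * ⟪v, y⟫ := by
  rw [inner_orthogonalProjectionOnto_eq_of_mem_right, ← starProjection_apply,
    starProjection_orthogonal_val, starProjection_unit_singleton ℝ hv, inner_sub_right,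
    real_inner_smul_right, real_inner_comm x v]
  ring

theorem norm_sq_orthogonalProjectionOnto_orthogonal_span_singleton (hv : ‖v‖ = 1) (x : E) :
    ‖(ℝ ∙ v)ᗮ.orthogonalProjectionOnto x‖ ^ 2 = ‖x‖ ^ 2 - ⟪v, x⟫ ^ 2 := by
  rw [← real_inner_self_eq_norm_sq, inner_orthogonalProjectionOnto_orthogonal_span_singleton hv,
    real_inner_self_eq_norm_sq]
  ring

theorem norm_stereoToFun_add_eq (hv : ‖v‖ = 1) {x n : E} (hx : ‖x‖ = 1) (hxv : x ≠ v)
    (hnx : ⟪n, x⟫ = 0) (hvn : ⟪v, n⟫ ≠ 0) :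
    ‖stereoToFun v x + (2 / ⟪v, n⟫) • (ℝ ∙ v)ᗮ.orthogonalProjectionOnto n‖ =
      2 * ‖n‖ / |⟪v, n⟫| := by
  have hvx : 1 - ⟪v, x⟫ ≠ 0 :=
    sub_ne_zero.2 fun h ↦ hxv ((inner_eq_one_iff_of_norm_eq_one hv hx).1 h.symm).symm
  have hp := norm_sq_orthogonalProjectionOnto_orthogonal_span_singleton hv x
  have hq := norm_sq_orthogonalProjectionOnto_orthogonal_span_singleton hv n
  have hpq := inner_orthogonalProjectionOnto_orthogonal_span_singleton hv x n
  rw [real_inner_comm n x, hnx] at hpq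
  rw [← sq_eq_sq₀ (norm_nonneg _) (by positivity), div_pow, mul_pow, sq_abs, stereoToFun_apply,
    innerSL_apply_apply, norm_add_sq_real, norm_smul, norm_smul, mul_pow, mul_pow,
    real_inner_smul_left, real_inner_smul_right, hp, hpq, hq, hx, Real.norm_eq_abs,
    Real.norm_eq_abs, sq_abs, sq_abs]
  field_simp
  ring

theorem inner_orthogonalProjectionOnto_stereoToFun (hv : ‖v‖ = 1) {x n : E}
    (hnx : ⟪n, x⟫ = 0) (hvn : ⟪v, n⟫ = 0) :
    ⟪(ℝ ∙ v)ᗮ.orthogonalProjectionOnto n, stereoToFun v x⟫ = 0 := by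
  rw [stereoToFun_apply, real_inner_smul_right,
    inner_orthogonalProjectionOnto_orthogonal_span_singleton hv, hnx, hvn, zero_mul, sub_zero,
    mul_zero]

end Stereographic

theorem exists_ne_zero_forall_inner_eq_zero_eq_smul {F : Type*} [NormedAddCommGroup F]
    [InnerProductSpace ℝ F] (hF : finrank ℝ F = 2) {u : F} (hu : u ≠ 0) :
    ∃ w ≠ (0 : F), ∀ y : F, ⟪u, y⟫ = 0 → ∃ t : ℝ, y = t • w := by
  have : Fact (finrank ℝ F = 1 + 1) := ⟨hF⟩
  obtain ⟨w, hw, hspan⟩ := finrank_eq_one_iff'.1 (finrank_orthogonal_span_singleton (𝕜 := ℝ) hu)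
  refine ⟨w, by simpa using hw, fun y hy ↦ ?_⟩
  obtain ⟨t, ht⟩ := hspan ⟨y, mem_orthogonal_singleton_iff_inner_right.2 hy⟩
  exact ⟨t, congrArg Subtype.val ht.symm⟩

theorem stereographic_image_of_great_circle
    (v : EuclideanSpace ℝ (Fin 3)) (hv : ‖v‖ = 1)
    (n : EuclideanSpace ℝ (Fin 3)) (hn : n ≠ 0) :
    (∃ (c : (ℝ ∙ v)ᗮ) (ρ : ℝ),
      ∀ x : EuclideanSpace ℝ (Fin 3), ‖x‖ = 1 → (inner ℝ n x : ℝ) = 0 → x ≠ v →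
        ‖((2 / (1 - (inner ℝ v x : ℝ))) • (Submodule.orthogonalProjectionOnto (ℝ ∙ v)ᗮ x : (ℝ ∙ v)ᗮ)) - c‖ = ρ) ∨
    (∃ (p w : (ℝ ∙ v)ᗮ), w ≠ 0 ∧
      ∀ x : EuclideanSpace ℝ (Fin 3), ‖x‖ = 1 → (inner ℝ n x : ℝ) = 0 → x ≠ v →
        ∃ t : ℝ,
          ((2 / (1 - (inner ℝ v x : ℝ))) • (Submodule.orthogonalProjectionOnto (ℝ ∙ v)ᗮ x : (ℝ ∙ v)ᗮ))
            = p + t • w) := by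
  set P := (ℝ ∙ v)ᗮ.orthogonalProjectionOnto
  by_cases hvn : ⟪v, n⟫ = 0
  · right
    have : Fact (finrank ℝ (EuclideanSpace ℝ (Fin 3)) = 2 + 1) := ⟨by simp⟩
    have hPn : P n ≠ 0 := by
      rw [← norm_ne_zero_iff, ← pow_ne_zero_iff two_ne_zero,
        norm_sq_orthogonalProjectionOnto_orthogonal_span_singleton hv, hvn]
      simpa using hn
    obtain ⟨w, hw, hline⟩ := exists_ne_zero_forall_inner_eq_zero_eq_smul
      (finrank_orthogonal_span_singleton (ne_zero_of_norm_ne_zero (hv.trans_ne one_ne_zero))) hPn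
    exact ⟨0, w, hw, fun x _ hnx _ ↦ by
      simpa using hline _ (inner_orthogonalProjectionOnto_stereoToFun hv hnx hvn)⟩
  · left
    refine ⟨-(2 / ⟪v, n⟫) • P n, 2 * ‖n‖ / |⟪v, n⟫|, fun x hx hnx hxv ↦ ?_⟩
    rw [neg_smul, sub_neg_eq_add]
    exact norm_stereoToFun_add_eq hv hx hxv hnx hvn
end
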